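/- arXiv:1909.02193 — 2 statements merged into one kernel-verified Lean document; each statement's English description precedes it below -/
import Mathlib

section
/- For fixed b > 0 and c > 0, the partial derivative of f(a,b,c) = e^{-a/b} ∑_{i=0}^∞ ((a/b)^i/i!) · γ(1+i, c/b)/Γ(1+i) with respect to a equals (1/b) e^{-a/b} ∑_{i=0}^∞ ((a/b)^i/i!) · (Q(4+2i, 2c/b) − Q(2+2i, 2c/b)), where Q(m,t) is the CDF of the central chi-squared distribution with m degrees of freedom evaluated at t. -/
open Real

noncomputable def lowerIncGamma (p x : ℝ) : ℝ := ∫ t in (0:ℝ)..x, t ^ (p - 1) * Real.exp (-t)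

noncomputable def outageF (a b c : ℝ) : ℝ :=
  Real.exp (-(a / b)) *
    ∑' i : ℕ, ((a / b) ^ i / (Nat.factorial i)) *
      (lowerIncGamma (1 + i) (c / b) / (Nat.factorial i))

/-- CDF of the central chi-squared distribution with m degrees of freedom. -/
noncomputable def chiSqCDF (m : ℕ) (t : ℝ) : ℝ :=
  lowerIncGamma ((m : ℝ) / 2) (t / 2) / Real.Gamma ((m : ℝ) / 2)

/-!
Write `y = a / b` and `gₙ = γ(1 + n, c / b) / n!`, so that `f = e^{-y} ∑ yⁿ/n! gₙ` and
`gₙ = Q(2 + 2n, 2c / b)`. Since `0 ≤ gₙ ≤ 1`, the series and its term-by-term derivative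
`∑ yⁿ/n! gₙ₊₁` are dominated by exponential series on every ball, so the product rule gives
`e^{-y} ∑ yⁿ/n! (gₙ₊₁ - gₙ)`; the chain rule through `y = a / b` contributes the factor `1 / b`.
-/

theorem lowerIncGamma_nonneg (p : ℝ) {x : ℝ} (hx : 0 ≤ x) : 0 ≤ lowerIncGamma p x :=
  intervalIntegral.integral_nonneg hx fun _ ht =>
    mul_nonneg (Real.rpow_nonneg ht.1 _) (Real.exp_pos _).le

theorem lowerIncGamma_le_Gamma {p x : ℝ} (hp : 0 < p) (hx : 0 ≤ x) :
    lowerIncGamma p x ≤ Real.Gamma p := by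
  rw [Real.Gamma_eq_integral hp, lowerIncGamma, intervalIntegral.integral_of_le hx]
  simp_rw [mul_comm _ (Real.exp _)]
  refine MeasureTheory.setIntegral_mono_set (Real.GammaIntegral_convergent hp) ?_
    Set.Ioc_subset_Ioi_self.eventuallyLE
  filter_upwards [MeasureTheory.ae_restrict_mem measurableSet_Ioi] with t ht
  exact mul_nonneg (Real.exp_pos _).le (Real.rpow_nonneg (le_of_lt ht) _)

theorem norm_lowerIncGamma_div_factorial_le_one (n : ℕ) {x : ℝ} (hx : 0 ≤ x) :
    ‖lowerIncGamma (1 + n) x / n.factorial‖ ≤ 1 := by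
  have hΓ : Real.Gamma (1 + n) = n.factorial := by rw [add_comm, Real.Gamma_nat_eq_factorial]
  rw [Real.norm_of_nonneg (by have := lowerIncGamma_nonneg (1 + n) hx; positivity)]
  exact div_le_one_of_le₀ (hΓ ▸ lowerIncGamma_le_Gamma (by positivity) hx) (Nat.cast_nonneg _)

theorem chiSqCDF_two_add_two_mul (n : ℕ) (t : ℝ) :
    chiSqCDF (2 + 2 * n) t = lowerIncGamma (1 + n) (t / 2) / n.factorial := by
  have hm : ((2 + 2 * n : ℕ) : ℝ) / 2 = 1 + n := by push_cast; ring
  rw [chiSqCDF, hm, add_comm (1 : ℝ), Real.Gamma_nat_eq_factorial, add_comm (n : ℝ)]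

section PowerSeries

variable {𝕜 : Type*} [RCLike 𝕜] {g : ℕ → 𝕜} {M : ℝ}

theorem summable_pow_div_factorial_mul (hg : ∀ n, ‖g n‖ ≤ M) (x : 𝕜) :
    Summable fun n => x ^ n / n.factorial * g n := by
  refine Summable.of_norm_bounded ((Real.summable_pow_div_factorial ‖x‖).mul_right M) fun n => ?_
  rw [norm_mul, norm_div, norm_pow, RCLike.norm_natCast]
  exact mul_le_mul_of_nonneg_left (hg n) (by positivity)

theorem hasDerivAt_tsum_pow_div_factorial_mul (hg : ∀ n, ‖g n‖ ≤ M) (x : 𝕜) :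
    HasDerivAt (fun y => ∑' n, y ^ n / n.factorial * g n)
      (∑' n, x ^ n / n.factorial * g (n + 1)) x := by
  have hsplit : (fun y : 𝕜 => ∑' n, y ^ n / n.factorial * g n) =
      fun y => g 0 + ∑' n, y ^ (n + 1) / (n + 1).factorial * g (n + 1) := by
    funext y
    rw [(summable_pow_div_factorial_mul hg y).tsum_eq_zero_add]
    simp
  have hterm : ∀ n (y : 𝕜), HasDerivAt (fun z => z ^ (n + 1) / (n + 1).factorial * g (n + 1))
      (y ^ n / n.factorial * g (n + 1)) y := by
    intro n y
    refine (((hasDerivAt_pow (n + 1) y).div_const _).mul_const (g (n + 1))).congr_deriv ?_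
    rw [Nat.factorial_succ, Nat.cast_mul, Nat.add_sub_cancel]
    field_simp
  have hbound : ∀ n (y : 𝕜), y ∈ Metric.ball 0 (‖x‖ + 1) →
      ‖y ^ n / n.factorial * g (n + 1)‖ ≤ (‖x‖ + 1) ^ n / n.factorial * M := by
    intro n y hy
    rw [norm_mul, norm_div, norm_pow, RCLike.norm_natCast]
    gcongr
    · exact (mem_ball_zero_iff.mp hy).le
    · exact hg (n + 1)
  have hx : x ∈ Metric.ball (0 : 𝕜) (‖x‖ + 1) := by simp
  rw [hsplit]
  exact (hasDerivAt_tsum_of_isPreconnected ((Real.summable_pow_div_factorial _).mul_right M)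
    Metric.isOpen_ball (convex_ball _ _).isPreconnected (fun n y _ => hterm n y) hbound hx
    ((summable_nat_add_iff 1).mpr (summable_pow_div_factorial_mul hg x)) hx).const_add (g 0)

end PowerSeries

theorem hasDerivAt_exp_neg_mul_tsum_pow_div_factorial_mul {g : ℕ → ℝ} {M : ℝ}
    (hg : ∀ n, ‖g n‖ ≤ M) (x : ℝ) :
    HasDerivAt (fun y => Real.exp (-y) * ∑' n, y ^ n / n.factorial * g n)
      (Real.exp (-x) * ∑' n, x ^ n / n.factorial * (g (n + 1) - g n)) x := by
  refine ((hasDerivAt_neg x).exp.mul (hasDerivAt_tsum_pow_div_factorial_mul hg x)).congr_deriv ?_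
  simp_rw [mul_sub]
  rw [(summable_pow_div_factorial_mul (fun n => hg (n + 1)) x).tsum_sub
    (summable_pow_div_factorial_mul hg x)]
  ring

theorem stmt5_general (b c : ℝ) (hb : 0 < b) (hc : 0 < c) (a : ℝ) :
    HasDerivAt (fun x => outageF x b c)
      ((1 / b) * Real.exp (-(a / b)) *
        ∑' i : ℕ, ((a / b) ^ i / (Nat.factorial i)) *
          (chiSqCDF (4 + 2 * i) (2 * c / b) - chiSqCDF (2 + 2 * i) (2 * c / b))) a := by
  set g : ℕ → ℝ := fun n => lowerIncGamma (1 + n) (c / b) / n.factorial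
  have hg : ∀ n, ‖g n‖ ≤ 1 := fun n =>
    norm_lowerIncGamma_div_factorial_le_one n (div_pos hc hb).le
  have hQ : ∀ n : ℕ, chiSqCDF (2 + 2 * n) (2 * c / b) = g n := fun n => by
    rw [chiSqCDF_two_add_two_mul, mul_div_assoc, mul_div_cancel_left₀ _ two_ne_zero]
  have hQ' : ∀ n : ℕ, chiSqCDF (4 + 2 * n) (2 * c / b) = g (n + 1) := fun n => by
    rw [show 4 + 2 * n = 2 + 2 * (n + 1) by ring, hQ]
  refine ((hasDerivAt_exp_neg_mul_tsum_pow_div_factorial_mul hg (a / b)).comp a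
    ((hasDerivAt_id a).div_const b)).congr_deriv ?_
  simp only [hQ, hQ']
  ring

/-- ∂f/∂a = (1/b) e^{-a/b} ∑_i ((a/b)^i/i!) (Q(4+2i, 2c/b) − Q(2+2i, 2c/b)). -/
theorem stmt5 (b c : ℝ) (hb : 0 < b) (hc : 0 < c) (a : ℝ) (ha : 0 ≤ a) :
    HasDerivAt (fun x => outageF x b c)
      ((1 / b) * Real.exp (-(a / b)) *
        ∑' i : ℕ, ((a / b) ^ i / (Nat.factorial i)) *
          (chiSqCDF (4 + 2 * i) (2 * c / b) - chiSqCDF (2 + 2 * i) (2 * c / b))) a :=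
  stmt5_general b c hb hc a
end

section
/- For fixed a ≥ 0 and c > 0, the limit of f(a, b, c) = e^{-a/b} ∑_{i=0}^∞ ((a/b)^i/i!) γ(1+i, c/b)/Γ(1+i) as b → 0+ equals 0 if a > c and equals 1 if a < c. -/
/-!
Since `γ(1 + i, y) / i! = P(N' > i)` for `N' ~ Poisson(y)`, `f(a, b, c) = P(N' > N)` for independent
`N ~ Poisson(a/b)` and `N' ~ Poisson(c/b)`. A Poisson variable has variance equal to its mean, and the
two means are `|a - c|/b` apart, so by Chebyshev each of `N`, `N'` falls on the wrong side of the
midpoint `(a + c)/(2b)` with probability `O(b)`.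
-/

open Real Filter

open Finset Nat

lemma hasSum_pow_div_factorial (x : ℝ) : HasSum (fun k : ℕ => x ^ k / k !) (exp x) := by
  rw [exp_eq_exp_ℝ]
  exact NormedSpace.expSeries_div_hasSum_exp x

lemma hasSum_descFactorial_mul_pow_div_factorial (m : ℕ) (x : ℝ) :
    HasSum (fun k : ℕ => (k.descFactorial m : ℝ) * (x ^ k / k !)) (x ^ m * exp x) := by
  rw [← hasSum_nat_add_iff' m]
  have h0 : ∑ k ∈ range m, (k.descFactorial m : ℝ) * (x ^ k / k !) = 0 :=
    sum_eq_zero fun k hk => by simp [Nat.descFactorial_eq_zero_iff_lt.mpr (mem_range.mp hk)]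
  rw [h0, sub_zero]
  refine ((hasSum_pow_div_factorial x).mul_left (x ^ m)).congr_fun fun j => ?_
  have h := Nat.factorial_mul_descFactorial (Nat.le_add_left m j)
  rw [Nat.add_sub_cancel] at h
  rw [← h]
  push_cast
  field_simp
  ring

lemma hasSum_sq_sub_mul_pow_div_factorial (x : ℝ) :
    HasSum (fun k : ℕ => ((k : ℝ) - x) ^ 2 * (x ^ k / k !)) (x * exp x) := by
  have h2 := hasSum_descFactorial_mul_pow_div_factorial 2 x
  have h1 := (hasSum_descFactorial_mul_pow_div_factorial 1 x).mul_left (1 - 2 * x)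
  have h0 := (hasSum_descFactorial_mul_pow_div_factorial 0 x).mul_left (x ^ 2)
  convert (h2.add h1).add h0 using 2 with k
  · simp only [Nat.cast_descFactorial_two, Nat.descFactorial_one, Nat.descFactorial_zero]
    push_cast; ring
  · ring

lemma hasDerivAt_sum_range_pow_div_factorial (n : ℕ) (t : ℝ) :
    HasDerivAt (fun t : ℝ => ∑ k ∈ range (n + 1), t ^ k / k !)
      (∑ k ∈ range n, t ^ k / k !) t := by
  induction n with
  | zero => simpa using hasDerivAt_const t (1 : ℝ)
  | succ n ih =>
    simp only [sum_range_succ _ (n + 1), sum_range_succ _ n] at ih ⊢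
    refine ih.add (((hasDerivAt_pow (n + 1) t).div_const ((n + 1)! : ℝ)).congr_deriv ?_)
    rw [Nat.factorial_succ]
    push_cast
    field_simp

noncomputable def poissonProb (x : ℝ) (s : Set ℕ) : ℝ :=
  exp (-x) * ∑' k, s.indicator (fun k => x ^ k / k !) k

noncomputable def poissonExpectation (x : ℝ) (g : ℕ → ℝ) : ℝ :=
  exp (-x) * ∑' k, x ^ k / k ! * g k

section Poisson

variable {x : ℝ} {s t : Set ℕ}

lemma poissonProb_nonneg (hx : 0 ≤ x) (s : Set ℕ) : 0 ≤ poissonProb x s :=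
  mul_nonneg (exp_nonneg _) (tsum_nonneg fun _ => Set.indicator_nonneg (fun _ _ => by positivity) _)

lemma poissonProb_mono (hx : 0 ≤ x) (hst : s ⊆ t) : poissonProb x s ≤ poissonProb x t := by
  refine mul_le_mul_of_nonneg_left ?_ (exp_nonneg _)
  exact ((summable_pow_div_factorial x).indicator s).tsum_mono
    ((summable_pow_div_factorial x).indicator t)
    (Set.indicator_le_indicator_of_subset hst fun _ => by positivity)

lemma poissonProb_compl (x : ℝ) (s : Set ℕ) : poissonProb x sᶜ = 1 - poissonProb x s := by
  have h := ((summable_pow_div_factorial x).indicator s).hasSum.add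
    ((summable_pow_div_factorial x).indicator sᶜ).hasSum
  simp only [Set.indicator_self_add_compl_apply] at h
  rw [poissonProb, poissonProb, eq_sub_iff_add_eq, ← mul_add, add_comm,
    ← (hasSum_pow_div_factorial x).unique h, ← exp_add, neg_add_cancel, exp_zero]

lemma poissonProb_le_one (hx : 0 ≤ x) (s : Set ℕ) : poissonProb x s ≤ 1 := by
  linarith [poissonProb_compl x s, poissonProb_nonneg hx sᶜ]

lemma poissonProb_Iic (x : ℝ) (n : ℕ) :
    poissonProb x (Set.Iic n) = exp (-x) * ∑ k ∈ range (n + 1), x ^ k / k ! := by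
  rw [poissonProb, tsum_eq_sum (s := range (n + 1)) fun k hk => Set.indicator_of_notMem
    (by simpa [Nat.lt_succ_iff] using hk) _]
  congr 1
  exact sum_congr rfl fun k hk => Set.indicator_of_mem
    (by simpa [Nat.lt_succ_iff] using hk) _

/-- Chebyshev's inequality: the Poisson law of mean `x` has variance `x`. -/
lemma poissonProb_le_div_sq (hx : 0 ≤ x) {r : ℝ} (hr : 0 < r)
    (hs : ∀ k ∈ s, r ≤ |(k : ℝ) - x|) : poissonProb x s ≤ x / r ^ 2 := by
  have hle : s.indicator (fun k : ℕ => x ^ k / k !) ≤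
      fun k : ℕ => ((k : ℝ) - x) ^ 2 * (x ^ k / k !) / r ^ 2 := by
    intro k
    by_cases hk : k ∈ s
    · have hsq : r ^ 2 ≤ ((k : ℝ) - x) ^ 2 := by
        simpa only [sq_abs] using pow_le_pow_left₀ hr.le (hs k hk) 2
      rw [Set.indicator_of_mem hk, le_div_iff₀ (by positivity), mul_comm]
      exact mul_le_mul_of_nonneg_right hsq (by positivity)
    · rw [Set.indicator_of_notMem hk]
      positivity
  calc poissonProb x s ≤ exp (-x) * (x * exp x / r ^ 2) :=
        mul_le_mul_of_nonneg_left (hasSum_le hle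
          ((summable_pow_div_factorial x).indicator s).hasSum
          ((hasSum_sq_sub_mul_pow_div_factorial x).div_const _)) (exp_nonneg _)
    _ = x / r ^ 2 := by rw [exp_neg]; field_simp

lemma poissonProb_setOf_lt_le {m : ℝ} (hx : 0 ≤ x) (hxm : x < m) :
    poissonProb x {k | m < k} ≤ x / (m - x) ^ 2 :=
  poissonProb_le_div_sq hx (sub_pos.mpr hxm) fun k (hk : m < k) => by
    rw [abs_of_pos (by linarith)]
    linarith

lemma poissonProb_setOf_le_le {m : ℝ} (hx : 0 ≤ x) (hmx : m < x) :
    poissonProb x {k | (k : ℝ) ≤ m} ≤ x / (x - m) ^ 2 :=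
  poissonProb_le_div_sq hx (sub_pos.mpr hmx) fun k (hk : (k : ℝ) ≤ m) => by
    rw [abs_of_neg (by linarith)]
    linarith

end Poisson

lemma lowerIncGamma_one_add_natCast (n : ℕ) (y : ℝ) :
    lowerIncGamma (1 + n) y = n ! * poissonProb y (Set.Ioi n) := by
  set S : ℝ → ℝ := fun t => ∑ k ∈ range (n + 1), t ^ k / (k ! : ℝ)
  have hderiv : ∀ t : ℝ, HasDerivAt (fun t => -(n ! * (exp (-t) * S t))) (t ^ n * exp (-t)) t := by
    intro t
    have h := (((hasDerivAt_neg t).exp).mul (hasDerivAt_sum_range_pow_div_factorial n t)).const_mul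
      (n ! : ℝ) |>.neg
    refine h.congr_deriv ?_
    simp only [sum_range_succ]
    field_simp
    ring
  have hS0 : S 0 = 1 := by simp [S, sum_range_succ']
  rw [lowerIncGamma, ← Set.compl_Iic, poissonProb_compl, poissonProb_Iic]
  simp only [add_sub_cancel_left, rpow_natCast]
  rw [intervalIntegral.integral_eq_sub_of_hasDerivAt (fun t _ => hderiv t)
    ((by fun_prop : Continuous fun t : ℝ => t ^ n * exp (-t)).intervalIntegrable _ _), hS0]
  simp only [S, neg_zero, exp_zero, mul_one]
  ring

section Expectation

variable {x : ℝ} {g : ℕ → ℝ}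

lemma summable_pow_div_factorial_mul_s18 (hx : 0 ≤ x) (hg0 : ∀ i, 0 ≤ g i) (hg1 : ∀ i, g i ≤ 1) :
    Summable fun i : ℕ => x ^ i / i ! * g i :=
  (summable_pow_div_factorial x).of_nonneg_of_le (fun i => mul_nonneg (by positivity) (hg0 i))
    fun i => mul_le_of_le_one_right (by positivity) (hg1 i)

lemma poissonExpectation_nonneg (hx : 0 ≤ x) (hg0 : ∀ i, 0 ≤ g i) : 0 ≤ poissonExpectation x g :=
  mul_nonneg (exp_nonneg _) (tsum_nonneg fun i => mul_nonneg (by positivity) (hg0 i))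

lemma poissonExpectation_one_sub (hx : 0 ≤ x) (hg0 : ∀ i, 0 ≤ g i) (hg1 : ∀ i, g i ≤ 1) :
    poissonExpectation x (fun i => 1 - g i) = 1 - poissonExpectation x g := by
  simp only [poissonExpectation, mul_one_sub]
  rw [(summable_pow_div_factorial x).tsum_sub (summable_pow_div_factorial_mul_s18 hx hg0 hg1),
    (hasSum_pow_div_factorial x).tsum_eq, mul_sub, ← exp_add, neg_add_cancel, exp_zero]

lemma poissonExpectation_le (hx : 0 ≤ x) (hg0 : ∀ i, 0 ≤ g i) (hg1 : ∀ i, g i ≤ 1)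
    {s : Set ℕ} {Q : ℝ} (hQ : 0 ≤ Q) (hgQ : ∀ i ∉ s, g i ≤ Q) :
    poissonExpectation x g ≤ poissonProb x s + Q := by
  have hle : ∀ i : ℕ,
      x ^ i / i ! * g i ≤ s.indicator (fun k => x ^ k / k !) i + Q * (x ^ i / i !) := by
    intro i
    have hw : 0 ≤ x ^ i / i ! := by positivity
    by_cases hi : i ∈ s
    · rw [Set.indicator_of_mem hi]
      nlinarith [hg1 i, mul_nonneg hQ hw]
    · rw [Set.indicator_of_notMem hi, zero_add, mul_comm Q]
      exact mul_le_mul_of_nonneg_left (hgQ i hi) hw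
  have hsum := ((summable_pow_div_factorial x).indicator s).hasSum.add
    ((hasSum_pow_div_factorial x).mul_left Q)
  calc poissonExpectation x g
      ≤ exp (-x) * (∑' k, s.indicator (fun k => x ^ k / k !) k + Q * exp x) :=
        mul_le_mul_of_nonneg_left (hasSum_le hle
          (summable_pow_div_factorial_mul_s18 hx hg0 hg1).hasSum hsum) (exp_nonneg _)
    _ = poissonProb x s + Q := by
        rw [poissonProb, mul_add, mul_left_comm, ← exp_add, neg_add_cancel, exp_zero, mul_one]

end Expectation

lemma poissonExpectation_poissonProb_Ioi_le {x y m : ℝ} (hx : 0 ≤ x) (hy : 0 ≤ y)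
    (hym : y < m) (hmx : m < x) :
    poissonExpectation x (fun i => poissonProb y (Set.Ioi i))
      ≤ x / (x - m) ^ 2 + y / (m - y) ^ 2 := by
  refine (poissonExpectation_le hx (fun i => poissonProb_nonneg hy _)
    (fun i => poissonProb_le_one hy _) (s := {k | (k : ℝ) ≤ m}) (poissonProb_nonneg hy _)
    fun i hi => ?_).trans (add_le_add (poissonProb_setOf_le_le hx hmx) (poissonProb_setOf_lt_le hy hym))
  refine poissonProb_mono hy fun k hk => ?_
  simp only [Set.mem_Ioi, Set.mem_ofPred_eq, not_le] at hi hk ⊢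
  exact hi.trans (by exact_mod_cast hk)

lemma poissonExpectation_poissonProb_Iic_le {x y m : ℝ} (hx : 0 ≤ x) (hy : 0 ≤ y)
    (hxm : x < m) (hmy : m < y) :
    poissonExpectation x (fun i => poissonProb y (Set.Iic i))
      ≤ x / (m - x) ^ 2 + y / (y - m) ^ 2 := by
  refine (poissonExpectation_le hx (fun i => poissonProb_nonneg hy _)
    (fun i => poissonProb_le_one hy _) (s := {k | m < k}) (poissonProb_nonneg hy _)
    fun i hi => ?_).trans (add_le_add (poissonProb_setOf_lt_le hx hxm) (poissonProb_setOf_le_le hy hmy))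
  refine poissonProb_mono hy fun k hk => ?_
  simp only [Set.mem_Iic, Set.mem_ofPred_eq, not_lt] at hi hk ⊢
  exact (Nat.cast_le.mpr hk).trans hi

lemma div_lt_add_div_two_mul {p q b : ℝ} (hb : 0 < b) (hpq : p < q) :
    p / b < (p + q) / (2 * b) ∧ (p + q) / (2 * b) < q / b := by
  rw [div_lt_div_iff₀ hb (by positivity), div_lt_div_iff₀ (by positivity) hb]
  constructor <;> nlinarith

lemma div_sq_add_div_sq_midpoint {a b c : ℝ} (hb : b ≠ 0) (hac : a ≠ c) :
    a / b / (a / b - (a + c) / (2 * b)) ^ 2 + c / b / ((a + c) / (2 * b) - c / b) ^ 2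
      = 4 * (a + c) / (a - c) ^ 2 * b := by
  have hac' : a - c ≠ 0 := sub_ne_zero.mpr hac
  rw [show a / b - (a + c) / (2 * b) = (a - c) / (2 * b) by field_simp; ring,
    show (a + c) / (2 * b) - c / b = (a - c) / (2 * b) by field_simp; ring]
  field_simp
  ring

section Outage

variable {a b c : ℝ}

lemma outageF_eq (a b c : ℝ) :
    outageF a b c = poissonExpectation (a / b) (fun i => poissonProb (c / b) (Set.Ioi i)) := by
  unfold outageF poissonExpectation
  congr 2 with i
  rw [lowerIncGamma_one_add_natCast, mul_div_cancel_left₀ _ (by positivity)]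

lemma one_sub_outageF_eq (ha : 0 ≤ a) (hb : 0 < b) (hc : 0 ≤ c) :
    1 - outageF a b c = poissonExpectation (a / b) (fun i => poissonProb (c / b) (Set.Iic i)) := by
  have hcb : 0 ≤ c / b := div_nonneg hc hb.le
  simp only [outageF_eq, ← Set.compl_Ioi, poissonProb_compl]
  exact (poissonExpectation_one_sub (div_nonneg ha hb.le) (fun i => poissonProb_nonneg hcb _)
    (fun i => poissonProb_le_one hcb _)).symm

lemma outageF_nonneg (ha : 0 ≤ a) (hb : 0 < b) (hc : 0 ≤ c) : 0 ≤ outageF a b c := by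
  rw [outageF_eq]
  exact poissonExpectation_nonneg (div_nonneg ha hb.le)
    fun i => poissonProb_nonneg (div_nonneg hc hb.le) _

lemma outageF_le_one (ha : 0 ≤ a) (hb : 0 < b) (hc : 0 ≤ c) : outageF a b c ≤ 1 := by
  have h := one_sub_outageF_eq ha hb hc
  have h0 := poissonExpectation_nonneg (div_nonneg ha hb.le)
    fun i => poissonProb_nonneg (div_nonneg hc hb.le) (Set.Iic i)
  linarith

lemma outageF_le_of_lt (ha : 0 ≤ a) (hb : 0 < b) (hc : 0 ≤ c) (hca : c < a) :
    outageF a b c ≤ 4 * (a + c) / (a - c) ^ 2 * b := by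
  obtain ⟨hym, hmx⟩ := div_lt_add_div_two_mul hb hca
  rw [add_comm c a] at hym hmx
  rw [outageF_eq, ← div_sq_add_div_sq_midpoint hb.ne' hca.ne']
  exact poissonExpectation_poissonProb_Ioi_le (div_nonneg ha hb.le) (div_nonneg hc hb.le) hym hmx

lemma one_sub_outageF_le_of_lt (ha : 0 ≤ a) (hb : 0 < b) (hac : a < c) :
    1 - outageF a b c ≤ 4 * (a + c) / (a - c) ^ 2 * b := by
  have hc : 0 ≤ c := ha.trans hac.le
  obtain ⟨hxm, hmy⟩ := div_lt_add_div_two_mul hb hac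
  rw [one_sub_outageF_eq ha hb hc, ← div_sq_add_div_sq_midpoint hb.ne' hac.ne,
    sub_sq_comm (a / b), sub_sq_comm ((a + c) / (2 * b)) (c / b)]
  exact poissonExpectation_poissonProb_Iic_le (div_nonneg ha hb.le) (div_nonneg hc hb.le) hxm hmy

end Outage

lemma tendsto_nhdsGT_zero_of_le_mul {u : ℝ → ℝ} (K : ℝ) (h0 : ∀ b > 0, 0 ≤ u b)
    (hK : ∀ b > 0, u b ≤ K * b) : Tendsto u (nhdsWithin 0 (Set.Ioi 0)) (nhds 0) := by
  have hlin : Tendsto (fun b => K * b) (nhdsWithin 0 (Set.Ioi 0)) (nhds 0) := by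
    simpa using (tendsto_id.const_mul K).mono_left (nhdsWithin_le_nhds (a := (0 : ℝ)))
  exact squeeze_zero' (eventually_nhdsWithin_of_forall h0) (eventually_nhdsWithin_of_forall hK) hlin

/-- As the NLoS power b → 0⁺, the outage probability tends to 0 if a > c and to 1 if a < c. -/
theorem stmt18 (a c : ℝ) (ha : 0 ≤ a) (hc : 0 < c) :
    (c < a → Tendsto (fun b => outageF a b c) (nhdsWithin 0 (Set.Ioi 0)) (nhds 0)) ∧
    (a < c → Tendsto (fun b => outageF a b c) (nhdsWithin 0 (Set.Ioi 0)) (nhds 1)) := by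
  refine ⟨fun hca => ?_, fun hac => ?_⟩
  · exact tendsto_nhdsGT_zero_of_le_mul _ (fun b hb => outageF_nonneg ha hb hc.le)
      fun b hb => outageF_le_of_lt ha hb hc.le hca
  · have h := tendsto_nhdsGT_zero_of_le_mul (u := fun b => 1 - outageF a b c) _
      (fun b hb => sub_nonneg.mpr (outageF_le_one ha hb hc.le))
      fun b hb => one_sub_outageF_le_of_lt ha hb hac
    simpa using (tendsto_const_nhds (x := (1 : ℝ))).sub h
end
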